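/- arXiv:2512.25016 — 6 statements merged into one kernel-verified Lean document; each statement's English description precedes it below -/
import Mathlib

section
/- For any reversal applied to a signed permutation, the number of cycles in the breakpoint graph changes by at most 1, i.e., Δc(ρ) ≤ 1. -/
/-!
Every black edge of `b` either is a black edge of `b'` or joins two points of `D`, so the
alternating cycles of `(b, g)` are unions of classes of the relation obtained from `(b', g)` by
additionally gluing all points of `D` together. Since `D` consists of the endpoints of two black
edges of `b'`, it meets at most two cycles of `(b', g)`, so this gluing merges at most two classes
into one and loses at most one class.
-/

/-- The alternating cycles of the breakpoint graph of a black perfect matching `b`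
and a gray perfect matching `g` (both fixed-point-free involutions). -/
def altCycleSetoid {V : Type*} (b g : Equiv.Perm V) : Setoid V :=
  Relation.EqvGen.setoid (fun v w => b v = w ∨ g v = w)

/-- The number of alternating cycles of the breakpoint graph. -/
noncomputable def numAltCycles {V : Type*} (b g : Equiv.Perm V) : ℕ :=
  Nat.card (Quotient (altCycleSetoid b g))

namespace Setoid

theorem card_quotient_le_of_le {α : Type*} {s t : Setoid α} [Finite (Quotient s)] (h : s ≤ t) :
    Nat.card (Quotient t) ≤ Nat.card (Quotient s) :=
  Nat.card_le_card_of_surjective (map_of_le h) fun q =>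
    q.inductionOn fun x => ⟨Quotient.mk s x, rfl⟩

end Setoid

namespace Relation

variable {V : Type*}

def glue (r : V → V → Prop) (D : Set V) : V → V → Prop :=
  fun u v => r u v ∨ (u ∈ D ∧ v ∈ D)

variable {r : V → V → Prop} {D : Set V}

theorem EqvGen.eqvGen_or_exists_of_glue {u v : V} (h : EqvGen (glue r D) u v) :
    EqvGen r u v ∨ (∃ d ∈ D, EqvGen r u d) ∧ ∃ d ∈ D, EqvGen r v d := by
  have e := EqvGen.is_equivalence r
  induction h with
  | rel u v huv =>
    rcases huv with huv | ⟨hu, hv⟩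
    · exact Or.inl (EqvGen.rel u v huv)
    · exact Or.inr ⟨⟨u, hu, e.refl u⟩, ⟨v, hv, e.refl v⟩⟩
  | refl u => exact Or.inl (e.refl u)
  | symm u v _ ih => exact ih.imp e.symm And.symm
  | trans u v w _ _ ih₁ ih₂ =>
    rcases ih₁ with huv | ⟨hu, d, hd, hvd⟩ <;> rcases ih₂ with hvw | ⟨⟨d', hd', hvd'⟩, hw⟩
    · exact Or.inl (e.trans huv hvw)
    · exact Or.inr ⟨⟨d', hd', e.trans huv hvd'⟩, hw⟩
    · exact Or.inr ⟨hu, d, hd, e.trans (e.symm hvw) hvd⟩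
    · exact Or.inr ⟨hu, hw⟩

theorem eqvGen_of_eqvGen_glue {a a' : V} (hD : ∀ d ∈ D, EqvGen r d a ∨ EqvGen r d a')
    {u v : V} (hu : ¬EqvGen r u a) (hv : ¬EqvGen r v a) (h : EqvGen (glue r D) u v) :
    EqvGen r u v := by
  have e := EqvGen.is_equivalence r
  have eqvGen_a' : ∀ w, ¬EqvGen r w a → ∀ d ∈ D, EqvGen r w d → EqvGen r w a' :=
    fun w hw d hd hwd =>
      (hD d hd).elim (fun hda => absurd (e.trans hwd hda) hw) (e.trans hwd)
  rcases h.eqvGen_or_exists_of_glue with huv | ⟨⟨d, hd, hud⟩, ⟨d', hd', hvd'⟩⟩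
  · exact huv
  · exact e.trans (eqvGen_a' u hu d hd hud) (e.symm (eqvGen_a' v hv d' hd' hvd'))

theorem card_quotient_le_card_quotient_glue_add_one [Finite V] {a a' : V}
    (hD : ∀ d ∈ D, EqvGen r d a ∨ EqvGen r d a') :
    Nat.card (Quotient (EqvGen.setoid r)) ≤
      Nat.card (Quotient (EqvGen.setoid (glue r D))) + 1 := by
  classical
  let φ := Setoid.map_of_le (Setoid.eqvGen_mono (r := r) (s := glue r D) fun _ _ => Or.inl)
  let f : Quotient (EqvGen.setoid r) → Option (Quotient (EqvGen.setoid (glue r D))) :=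
    fun q => if q = Quotient.mk _ a then none else some (φ q)
  have hf : f.Injective := by
    intro q q' hqq'
    induction q using Quotient.ind with | _ u => ?_
    induction q' using Quotient.ind with | _ v => ?_
    by_cases hu : Quotient.mk (EqvGen.setoid r) u = Quotient.mk _ a <;>
      by_cases hv : Quotient.mk (EqvGen.setoid r) v = Quotient.mk _ a <;>
      simp only [f, hu, hv, if_true, if_false, reduceCtorEq, Option.some.injEq] at hqq'
    · rw [hu, hv]
    · exact Quotient.sound (eqvGen_of_eqvGen_glue hD (fun h => hu (Quotient.sound h))
        (fun h => hv (Quotient.sound h)) (Quotient.exact hqq'))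
  simpa using Nat.card_le_card_of_injective f hf

end Relation

open Relation

theorem exists_forall_mem_eq_or_of_card_eq_four {V : Type*} {σ : V → V}
    (hσ : Function.Involutive σ) (hσ_ne : ∀ v, σ v ≠ v) {D : Finset V} (hD : D.card = 4)
    (hσD : ∀ v ∈ D, σ v ∈ D) :
    ∃ a a', ∀ d ∈ D, d = a ∨ d = σ a ∨ d = a' ∨ d = σ a' := by
  classical
  obtain ⟨a, ha⟩ : D.Nonempty := Finset.card_pos.mp (by omega)
  have hσa : σ a ∈ D.erase a := Finset.mem_erase.mpr ⟨hσ_ne a, hσD a ha⟩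
  have hE : ((D.erase a).erase (σ a)).card = 2 := by
    rw [Finset.card_erase_of_mem hσa, Finset.card_erase_of_mem ha, hD]
  obtain ⟨a', ha'⟩ : ((D.erase a).erase (σ a)).Nonempty := Finset.card_pos.mp (by omega)
  simp only [Finset.mem_erase] at ha'
  obtain ⟨ha'σa, ha'a, ha'D⟩ := ha'
  have hσa' : σ a' ∈ ((D.erase a).erase (σ a)).erase a' := by
    simp only [Finset.mem_erase]
    refine ⟨hσ_ne a', fun h => ha'a (hσ.injective h), fun h => ha'σa ?_, hσD a' ha'D⟩
    rw [← h, hσ]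
  have hF : (((D.erase a).erase (σ a)).erase a').card = 1 := by
    rw [Finset.card_erase_of_mem (by simp [ha'σa, ha'a, ha'D]), hE]
  refine ⟨a, a', fun d hd => ?_⟩
  by_contra! hne
  have hd' : d ∈ ((D.erase a).erase (σ a)).erase a' := by simp [hne.1, hne.2.1, hne.2.2.1, hd]
  exact hne.2.2.2 (Finset.card_le_one.mp hF.le d hd' (σ a') hσa')

theorem stmt2_general {V : Type*} [Fintype V]
    (b b' g : Equiv.Perm V)
    (hb'1 : ∀ v, b' v ≠ v) (hb'2 : ∀ v, b' (b' v) = v)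
    (D : Finset V) (hD : D.card = 4)
    (hbD : ∀ v ∈ D, b v ∈ D) (hb'D : ∀ v ∈ D, b' v ∈ D)
    (hsame : ∀ v ∉ D, b' v = b v) :
    numAltCycles b' g ≤ numAltCycles b g + 1 := by
  let r' : V → V → Prop := fun v w => b' v = w ∨ g v = w
  obtain ⟨a, a', hcover⟩ := exists_forall_mem_eq_or_of_card_eq_four hb'2 hb'1 hD hb'D
  have hD' : ∀ d ∈ (D : Set V), EqvGen r' d a ∨ EqvGen r' d a' := by
    intro d hd
    have black_edge : ∀ v, EqvGen r' (b' v) v := fun v =>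
      EqvGen.symm _ _ (EqvGen.rel _ _ (Or.inl rfl))
    rcases hcover d hd with rfl | rfl | rfl | rfl
    · exact Or.inl (EqvGen.refl d)
    · exact Or.inl (black_edge a)
    · exact Or.inr (EqvGen.refl d)
    · exact Or.inr (black_edge a')
  have hglue : ∀ v w, (b v = w ∨ g v = w) → glue r' D v w := by
    rintro v w (rfl | rfl)
    · by_cases hv : v ∈ D
      · exact Or.inr ⟨hv, hbD v hv⟩
      · exact Or.inl (Or.inl (hsame v hv))
    · exact Or.inl (Or.inr rfl)
  calc numAltCycles b' g ≤ Nat.card (Quotient (EqvGen.setoid (glue r' D))) + 1 :=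
        card_quotient_le_card_quotient_glue_add_one hD'
    _ ≤ numAltCycles b g + 1 :=
        Nat.add_le_add_right (Setoid.card_quotient_le_of_le (Setoid.eqvGen_mono hglue)) 1

/-- For any reversal applied to a signed permutation, the number of cycles of the
breakpoint graph changes by at most 1: a reversal replaces exactly two black edges
(on a set `D` of four endpoints) by two new black edges on the same endpoints,
leaving the gray matching `g` untouched, and then
`Δc = numAltCycles b' g - numAltCycles b g ≤ 1`. -/
theorem stmt2 {V : Type*} [Fintype V] [DecidableEq V]
    (b b' g : Equiv.Perm V)
    (hb1 : ∀ v, b v ≠ v) (hb2 : ∀ v, b (b v) = v)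
    (hb'1 : ∀ v, b' v ≠ v) (hb'2 : ∀ v, b' (b' v) = v)
    (hg1 : ∀ v, g v ≠ v) (hg2 : ∀ v, g (g v) = v)
    (D : Finset V) (hD : D.card = 4)
    (hbD : ∀ v ∈ D, b v ∈ D) (hb'D : ∀ v ∈ D, b' v ∈ D)
    (hsame : ∀ v ∉ D, b' v = b v) :
    numAltCycles b' g ≤ numAltCycles b g + 1 :=
  stmt2_general b b' g hb'1 hb'2 D hD hbD hb'D hsame
end

section
/- An operation that removes k black edges of a breakpoint graph and replaces them by k new black edges on the same 2k endpoints changes the number of alternating cycles by at most k − 1. -/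
namespace Stmt4Aux

open Relation

/-- The black edges outside `D`, plus all gray edges. -/
def midRel {V : Type*} (b g : Equiv.Perm V) (D : Finset V) (v w : V) : Prop :=
  (v ∉ D ∧ b v = w) ∨ g v = w

theorem close {V : Type*} (b g : Equiv.Perm V) (D : Finset V)
    (hb2 : ∀ v, b (b v) = v) (hg2 : ∀ v, g (g v) = v)
    {v : V} (hv : ∀ w, EqvGen (midRel b g D) v w → w ∉ D) :
    ∀ a w, EqvGen (fun x y => b x = y ∨ g x = y) a w →
      (EqvGen (midRel b g D) v a ↔ EqvGen (midRel b g D) v w) := by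
  intro a w h
  induction h with
  | rel x y hxy =>
      constructor
      · intro hx
        refine hx.trans _ _ _ (EqvGen.rel _ _ ?_)
        have hxD : x ∉ D := hv x hx
        rcases hxy with h | h
        · exact Or.inl ⟨hxD, h⟩
        · exact Or.inr h
      · intro hy
        refine hy.trans _ _ _ (EqvGen.rel _ _ ?_)
        have hyD : y ∉ D := hv y hy
        rcases hxy with h | h
        · exact Or.inl ⟨hyD, by rw [← h, hb2]⟩
        · exact Or.inr (by rw [← h, hg2])
  | refl x => exact Iff.rfl
  | symm x y _ ih => exact ih.symm
  | trans x y z _ _ ih1 ih2 => exact ih1.trans ih2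

theorem walk_key {V : Type*} [Finite V] (b g : Equiv.Perm V) (D : Finset V)
    (hb1 : ∀ v, b v ≠ v) (hb2 : ∀ v, b (b v) = v)
    (hg1 : ∀ v, g v ≠ v) (hg2 : ∀ v, g (g v) = v)
    (hbD : ∀ v ∈ D, b v ∈ D) {v : V} (hv : v ∈ D) :
    ∃ w ∈ D, w ≠ v ∧ EqvGen (midRel b g D) v w := by
  classical
  set c : Equiv.Perm V := g * b with hc
  have hbb : b * b = 1 := Equiv.ext fun x => hb2 x
  have hgg : g * g = 1 := Equiv.ext fun x => hg2 x
  have hbinv : b⁻¹ = b := inv_eq_of_mul_eq_one_right hbb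
  have hginv : g⁻¹ = g := inv_eq_of_mul_eq_one_right hgg
  have hcinv : c⁻¹ = b * g := by rw [hc, mul_inv_rev, hbinv, hginv]
  have hcapp : ∀ x, c x = g (b x) := fun x => rfl
  have hex : ∃ n, (c ^ n) (g v) ∈ D := by
    by_contra hcon
    push_neg at hcon
    obtain ⟨i, j, hij, hEq⟩ :=
      Finite.exists_ne_map_eq_of_infinite (fun n : ℕ => (c ^ n) (g v))
    have key : ∀ i j : ℕ, i < j → (c ^ i) (g v) = (c ^ j) (g v) → False := by
      intro i j hlt hEq
      have hp : (c ^ (j - i)) (g v) = g v := by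
        have h2 : (c ^ i) ((c ^ (j - i)) (g v)) = (c ^ i) (g v) := by
          rw [← Equiv.Perm.mul_apply, ← pow_add, Nat.add_sub_cancel' hlt.le]
          exact hEq.symm
        exact (Equiv.injective _) h2
      have hp1 : 1 ≤ j - i := Nat.sub_pos_of_lt hlt
      have h3 : c ((c ^ (j - i - 1)) (g v)) = g v := by
        rw [← Equiv.Perm.mul_apply, ← pow_succ', Nat.sub_add_cancel hp1]
        exact hp
      have h4 : b ((c ^ (j - i - 1)) (g v)) = v := by
        have := congrArg g h3
        rw [hcapp, hg2, hg2] at this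
        exact this
      have h5 : (c ^ (j - i - 1)) (g v) = b v := by
        have h6 := congrArg b h4
        rwa [hb2] at h6
      exact hcon _ (h5 ▸ hbD v hv)
    rcases hij.lt_or_gt with h | h
    · exact key _ _ h hEq
    · exact key _ _ h hEq.symm
  set n := Nat.find hex with hn
  have hmem : (c ^ n) (g v) ∈ D := Nat.find_spec hex
  have hlt : ∀ i, i < n → (c ^ i) (g v) ∉ D := fun i hi => Nat.find_min hex hi
  have chain : ∀ i, i ≤ n → EqvGen (midRel b g D) v ((c ^ i) (g v)) := by
    intro i
    induction i with
    | zero =>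
        intro _
        simpa using EqvGen.rel v (g v) (Or.inr rfl : midRel b g D v (g v))
    | succ i ih =>
        intro hin
        have hi : i < n := lt_of_lt_of_le (Nat.lt_succ_self i) hin
        have h1 := ih hi.le
        have hiD := hlt i hi
        have hstep : (c ^ (i + 1)) (g v) = g (b ((c ^ i) (g v))) := by
          rw [pow_succ']; rfl
        rw [hstep]
        exact (h1.trans _ _ _ (EqvGen.rel _ _ (Or.inl ⟨hiD, rfl⟩))).trans _ _ _
          (EqvGen.rel _ _ (Or.inr rfl))
  have hne : (c ^ n) (g v) ≠ v := by
    intro hw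
    rcases Nat.eq_zero_or_pos n with h0 | hpos
    · rw [h0] at hw
      simp at hw
      exact hg1 v hw
    have hsc : SemiconjBy b c c⁻¹ := by
      unfold SemiconjBy
      rw [hcinv, hc, ← mul_assoc]
    have hpow : ∀ i : ℕ, b * c ^ i = (c⁻¹) ^ i * b := fun i => (hsc.pow_right i).eq
    have hbg : b (g v) = (c ^ (n - 1)) (g v) := by
      have h1 : b (g v) = c⁻¹ v := by rw [hcinv]; rfl
      have h2 : c⁻¹ ((c ^ n) (g v)) = (c ^ (n - 1)) (g v) := by
        rw [← Equiv.Perm.mul_apply]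
        congr 1
        have h3 : c ^ n = c * c ^ (n - 1) := by
          rw [← pow_succ', Nat.sub_add_cancel hpos]
        rw [h3, inv_mul_cancel_left]
      calc b (g v) = c⁻¹ v := h1
        _ = c⁻¹ ((c ^ n) (g v)) := (congrArg (⇑c⁻¹) hw).symm
        _ = (c ^ (n - 1)) (g v) := h2
    have hkey : ∀ i, i ≤ n - 1 → b ((c ^ i) (g v)) = (c ^ (n - 1 - i)) (g v) := by
      intro i hi
      calc b ((c ^ i) (g v)) = ((c⁻¹) ^ i) (b (g v)) := by
            have h := congrArg (fun p : Equiv.Perm V => p (g v)) (hpow i)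
            simpa [Equiv.Perm.mul_apply] using h
        _ = ((c⁻¹) ^ i) ((c ^ (n - 1)) (g v)) := by rw [hbg]
        _ = (c ^ (n - 1 - i)) (g v) := by
            rw [← Equiv.Perm.mul_apply]
            congr 1
            have h2 : c ^ (n - 1) = c ^ i * c ^ (n - 1 - i) := by
              rw [← pow_add, Nat.add_sub_cancel' hi]
            rw [inv_pow, h2, inv_mul_cancel_left]
    rcases Nat.even_or_odd n with ⟨m, hm⟩ | ⟨m, hm⟩
    · -- n = 2m, m ≥ 1
      have hm1 : 1 ≤ m := by omega
      have h1 : b ((c ^ (m - 1)) (g v)) = (c ^ m) (g v) := by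
        have := hkey (m - 1) (by omega)
        rwa [show n - 1 - (m - 1) = m by omega] at this
      have h2 : (c ^ m) (g v) = g (b ((c ^ (m - 1)) (g v))) := by
        rw [show m = (m - 1) + 1 by omega, pow_succ']; rfl
      rw [h1] at h2
      exact hg1 _ h2.symm
    · -- n = 2m + 1
      have h1 : b ((c ^ m) (g v)) = (c ^ m) (g v) := by
        have := hkey m (by omega)
        rwa [show n - 1 - m = m by omega] at this
      exact hb1 _ h1
  exact ⟨(c ^ n) (g v), hmem, hne, chain n le_rfl⟩

theorem half{V : Type*} [Fintype V] [DecidableEq V] (k : ℕ) (hk : 1 ≤ k)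
    (b g : Equiv.Perm V)
    (hb1 : ∀ v, b v ≠ v) (hb2 : ∀ v, b (b v) = v)
    (hg1 : ∀ v, g v ≠ v) (hg2 : ∀ v, g (g v) = v)
    (D : Finset V) (hD : D.card = 2 * k) (hbD : ∀ v ∈ D, b v ∈ D) :
    numAltCycles b g ≤ Nat.card (Quotient (EqvGen.setoid (midRel b g D))) ∧
      Nat.card (Quotient (EqvGen.setoid (midRel b g D))) ≤ numAltCycles b g + (k - 1) := by
  classical
  set S := EqvGen.setoid (midRel b g D) with hS
  set T := altCycleSetoid b g with hT
  have hmono : ∀ x y : V, EqvGen (midRel b g D) x y →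
      EqvGen (fun v w => b v = w ∨ g v = w) x y := by
    intro x y h
    refine h.mono (fun a c hac => ?_)
    rcases hac with ⟨_, h'⟩ | h'
    · exact Or.inl h'
    · exact Or.inr h'
  let ψ : Quotient S → Quotient T := Quotient.map id (fun x y h => hmono x y h)
  have hψmk : ∀ x : V, ψ (Quotient.mk S x) = Quotient.mk T x := fun x => rfl
  have hsurj : Function.Surjective ψ := by
    intro q
    obtain ⟨x, rfl⟩ := Quotient.exists_rep q
    exact ⟨Quotient.mk S x, rfl⟩
  haveI : Fintype (Quotient S) := Fintype.ofFinite _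
  haveI : Fintype (Quotient T) := Fintype.ofFinite _
  set φ : V → Quotient S := fun d => Quotient.mk S d with hφ
  set A : Finset (Quotient S) := D.image φ with hA
  set B : Finset (Quotient S) := Finset.univ \ A with hB
  have hA2 : 2 * A.card ≤ D.card := by
    have hsum : D.card = ∑ q ∈ A, (D.filter fun d => φ d = q).card :=
      Finset.card_eq_sum_card_image φ D
    have hfib : ∀ q ∈ A, 2 ≤ (D.filter fun d => φ d = q).card := by
      intro q hq
      obtain ⟨d, hd, rfl⟩ := Finset.mem_image.mp hq
      obtain ⟨w, hwD, hwne, hwrel⟩ := walk_key b g D hb1 hb2 hg1 hg2 hbD hd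
      have h1 : d ∈ D.filter fun x => φ x = φ d := Finset.mem_filter.mpr ⟨hd, rfl⟩
      have h2 : w ∈ D.filter fun x => φ x = φ d :=
        Finset.mem_filter.mpr ⟨hwD, Quotient.sound (EqvGen.symm _ _ hwrel)⟩
      exact Finset.one_lt_card.mpr ⟨w, h2, d, h1, hwne⟩
    calc 2 * A.card = ∑ _q ∈ A, 2 := by rw [Finset.sum_const, smul_eq_mul, mul_comm]
      _ ≤ ∑ q ∈ A, (D.filter fun d => φ d = q).card := Finset.sum_le_sum hfib
      _ = D.card := hsum.symm
  have havoid : ∀ q ∈ B, ∀ x : V, Quotient.mk S x = q →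
      ∀ w, EqvGen (midRel b g D) x w → w ∉ D := by
    intro q hqB x hx w hrel hwD
    have h1 : φ w = q := by rw [← hx]; exact Quotient.sound (EqvGen.symm _ _ hrel)
    have h2 : q ∈ A := Finset.mem_image.mpr ⟨w, hwD, h1⟩
    exact (Finset.mem_sdiff.mp hqB).2 h2
  have hinj : Set.InjOn ψ ↑B := by
    intro q1 hq1 q2 hq2 hψ
    obtain ⟨x1, rfl⟩ := Quotient.exists_rep q1
    obtain ⟨x2, rfl⟩ := Quotient.exists_rep q2
    rw [hψmk, hψmk] at hψ
    have hfull : EqvGen (fun v w => b v = w ∨ g v = w) x1 x2 := Quotient.exact hψ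
    have h := close b g D hb2 hg2 (havoid _ (Finset.mem_coe.mp hq1) x1 rfl) x1 x2 hfull
    exact Quotient.sound (h.mp (EqvGen.refl x1))
  obtain ⟨d0, hd0⟩ := Finset.card_pos.mp (show 0 < D.card by omega)
  have hmiss : Quotient.mk T d0 ∉ B.image ψ := by
    intro hmem2
    obtain ⟨q, hqB, hψq⟩ := Finset.mem_image.mp hmem2
    obtain ⟨x, rfl⟩ := Quotient.exists_rep q
    rw [hψmk] at hψq
    have hfull : EqvGen (fun v w => b v = w ∨ g v = w) x d0 := Quotient.exact hψq
    have h := close b g D hb2 hg2 (havoid _ hqB x rfl) x d0 hfull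
    exact havoid _ hqB x rfl d0 (h.mp (EqvGen.refl x)) hd0
  have hcard : B.card + 1 ≤ Fintype.card (Quotient T) := by
    have h1 : (insert (Quotient.mk T d0) (B.image ψ)).card = B.card + 1 := by
      rw [Finset.card_insert_of_notMem hmiss, Finset.card_image_of_injOn hinj]
    have h2 := Finset.card_le_univ (insert (Quotient.mk T d0) (B.image ψ))
    omega
  have hQS : Nat.card (Quotient S) = A.card + B.card := by
    rw [Nat.card_eq_fintype_card]
    have h0 : (Finset.univ : Finset (Quotient S)).card = Fintype.card (Quotient S) :=
      Finset.card_univ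
    have h1 : B.card = (Finset.univ : Finset (Quotient S)).card - A.card := by
      rw [hB]; exact Finset.card_sdiff_of_subset (Finset.subset_univ A)
    have h2 := Finset.card_le_univ A
    omega
  have hQT : numAltCycles b g = Fintype.card (Quotient T) := by
    rw [numAltCycles, ← hT, Nat.card_eq_fintype_card]
  constructor
  · have := Nat.card_le_card_of_surjective ψ hsurj
    rw [numAltCycles, ← hT]
    exact this
  · omega

end Stmt4Aux

/-- An operation that removes `k` black edges of a breakpoint graph and replaces them
by `k` new black edges on the same `2k` endpoints (the set `D`), leaving the gray
matching `g` untouched, changes the number of alternating cycles by at most `k - 1`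
(in either direction). -/
theorem stmt4 {V : Type*} [Fintype V] [DecidableEq V] (k : ℕ) (hk : 1 ≤ k)
    (b b' g : Equiv.Perm V)
    (hb1 : ∀ v, b v ≠ v) (hb2 : ∀ v, b (b v) = v)
    (hb'1 : ∀ v, b' v ≠ v) (hb'2 : ∀ v, b' (b' v) = v)
    (hg1 : ∀ v, g v ≠ v) (hg2 : ∀ v, g (g v) = v)
    (D : Finset V) (hD : D.card = 2 * k)
    (hbD : ∀ v ∈ D, b v ∈ D) (hb'D : ∀ v ∈ D, b' v ∈ D)
    (hsame : ∀ v ∉ D, b' v = b v) :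
    numAltCycles b' g ≤ numAltCycles b g + (k - 1) ∧
    numAltCycles b g ≤ numAltCycles b' g + (k - 1) := by
  have hrel : Stmt4Aux.midRel b g D = Stmt4Aux.midRel b' g D := by
    funext x y
    apply propext
    constructor
    · rintro (⟨hx, h⟩ | h)
      · exact Or.inl ⟨hx, by rw [hsame x hx]; exact h⟩
      · exact Or.inr h
    · rintro (⟨hx, h⟩ | h)
      · exact Or.inl ⟨hx, by rw [← hsame x hx]; exact h⟩
      · exact Or.inr h
  obtain ⟨h1, h2⟩ := Stmt4Aux.half k hk b g hb1 hb2 hg1 hg2 D hD hbD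
  obtain ⟨h1', h2'⟩ := Stmt4Aux.half k hk b' g hb'1 hb'2 hg1 hg2 D hD hb'D
  rw [← hrel] at h1' h2'
  exact ⟨le_trans h1' h2, le_trans h1 h2'⟩
end

section
/- If the breakpoint graph G(G1,G2) has only trivial good cycles (every alternating cycle has exactly one origin and one target edge, equal weights on both, and no labels), then G1 = G2. -/
/-- `π^S`: the signed gene sequence of `G1` with the `α` characters (encoded as `0`,
genes exclusive to `G1`) removed. -/
def piS (s : List ℤ) : List ℤ := s.filter (fun x => x ≠ 0)

/-- The sequence `π^S` extended with the sentinels `0` and `m+1`. -/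
def extSeq (s : List ℤ) (m : ℕ) : List ℤ := 0 :: piS s ++ [(m : ℤ) + 1]

/-- `next(x, Σ_{π^S} ∩ Σ_ι)`: the smallest common gene greater than `x` (or `m+1`). -/
def nextGene (common : List ℕ) (m x : ℕ) : ℕ :=
  (common.filter (fun y => x < y)).foldr min (m + 1)

/-- If the labeled intergenic breakpoint graph `G(G1, G2)` has only trivial good cycles,
then `G1 = G2`. Here `G1 = (s, sInter)` is a signed sequence of distinct genes (with `0`
encoding the `α` characters exclusive to `G1`) together with its intergenic sizes, and
`G2` is the identity genome `(+1 … +m)` with intergenic sizes `tInter`. "Only trivial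
good cycles" is expressed on the graph: every origin edge coincides with a target edge
(`hTrivial`: each element of the extended sequence is positive and is the `next` common
gene after its predecessor, so each cycle has exactly one origin and one target edge),
every edge is clean (`hCleanOrigin`: no `α` in `s`; `hCleanTarget`: no gene of `ι`
is skipped, so target labels are empty), and every cycle is balanced (`hBalanced`:
origin weight equals target weight). The conclusion `G1 = G2` means equal signed gene
sequences and equal intergenic sizes. -/
theorem stmt6 (m : ℕ) (s : List ℤ) (sInter tInter : List ℕ)
    (hslen : sInter.length = s.length + 1) (htlen : tInter.length = m + 1)
    (hrange : ∀ x ∈ s, x.natAbs ≤ m)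
    (hdistinct : (piS s).Pairwise (fun a b => a.natAbs ≠ b.natAbs))
    (hTrivial : ∀ i : ℕ, i + 1 < (extSeq s m).length →
        0 < (extSeq s m).getD (i + 1) 0 ∧
        nextGene ((piS s).map Int.natAbs) m (((extSeq s m).getD i 0).natAbs)
          = ((extSeq s m).getD (i + 1) 0).natAbs)
    (hCleanOrigin : (0 : ℤ) ∉ s)
    (hCleanTarget : ∀ x ∈ (0 : ℕ) :: (piS s).map Int.natAbs,
        nextGene ((piS s).map Int.natAbs) m x = x + 1)
    (hBalanced : ∀ i : ℕ, i + 1 < (extSeq s m).length →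
        sInter.getD i 0 = tInter.getD (((extSeq s m).getD i 0).natAbs) 0) :
    s = (List.range' 1 m).map (fun i => (i : ℤ)) ∧ sInter = tInter := by
  have hps : piS s = s := by
    rw [piS, List.filter_eq_self]
    intro x hx
    simp only [ne_eq, decide_not, Bool.not_eq_true', decide_eq_false_iff_not]
    intro h; exact hCleanOrigin (h ▸ hx)
  have hE : extSeq s m = (0 : ℤ) :: (s ++ [(m : ℤ) + 1]) := by
    simp [extSeq, hps]
  have hlen : (extSeq s m).length = s.length + 2 := by simp [hE]
  -- getD facts
  have hget : ∀ j, j < s.length → (extSeq s m).getD (j + 1) 0 = s.getD j 0 := by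
    intro j hj
    rw [hE, List.getD_cons_succ, List.getD_append _ _ _ _ hj]
  have hgetlast : (extSeq s m).getD (s.length + 1) 0 = (m : ℤ) + 1 := by
    rw [hE, List.getD_cons_succ, List.getD_append_right _ _ _ _ le_rfl]
    simp
  -- key: the extended sequence is 0,1,2,...
  have key : ∀ i, i ≤ s.length + 1 → (extSeq s m).getD i 0 = (i : ℤ) := by
    intro i
    induction i with
    | zero => intro _; rw [hE]; rfl
    | succ n ih =>
      intro hn
      have hEn : (extSeq s m).getD n 0 = (n : ℤ) := ih (by omega)
      have hlt : n + 1 < (extSeq s m).length := by omega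
      obtain ⟨hpos, hnext⟩ := hTrivial n hlt
      have hmem : (n : ℕ) ∈ (0 : ℕ) :: (piS s).map Int.natAbs := by
        rcases Nat.eq_zero_or_pos n with h0 | h0
        · simp [h0]
        · right
          obtain ⟨k, rfl⟩ : ∃ k, n = k + 1 := ⟨n - 1, by omega⟩
          have hjlt : k < s.length := by omega
          have hsd : (extSeq s m).getD (k + 1) 0 = s.getD k 0 := hget k hjlt
          have hsmem : ((k : ℤ) + 1) ∈ s := by
            rw [hsd, List.getD_eq_getElem _ _ hjlt] at hEn
            have : s[k] = (k : ℤ) + 1 := by rw [hEn]; push_cast; ring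
            exact this ▸ List.getElem_mem hjlt
          rw [hps]
          refine List.mem_map.mpr ⟨(k : ℤ) + 1, hsmem, ?_⟩
          omega
      have hnx := hCleanTarget n hmem
      rw [hEn] at hnext
      simp only [Int.natAbs_natCast] at hnext
      rw [hnx] at hnext
      omega
  -- the last entry gives s.length = m
  have hm : s.length = m := by
    have h2 := key (s.length + 1) le_rfl
    rw [hgetlast] at h2
    omega
  have hgel : ∀ j (hj : j < s.length), s[j] = (j : ℤ) + 1 := by
    intro j hj
    have h2 := key (j + 1) (by omega)
    rw [hget j hj, List.getD_eq_getElem _ _ hj] at h2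
    rw [h2]; push_cast; ring
  have hcoe : (List.range' 1 m).map (fun i => (i : ℤ))
      = List.map (fun i : ℕ => (i : ℤ)) (List.range' 1 m) := by
    rw [show ((List.range' 1 m).map (fun i => (i : ℤ)))
        = List.map (fun i : ℤ => i)
          ((List.range' 1 m).flatMap (pure ∘ (fun i : ℕ => (i : ℤ)))) from rfl]
    rw [List.flatMap_pure_eq_map]; simp
  constructor
  · rw [hcoe]
    apply List.ext_getElem
    · rw [List.length_map, List.length_range', hm]
    · intro j hj hj'
      rw [hgel j hj, List.getElem_map, List.getElem_range']
      push_cast; ring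
  · apply List.ext_getElem
    · omega
    · intro i hi hi'
      have hib := hBalanced i (by omega)
      rw [key i (by omega)] at hib
      simp only [Int.natAbs_natCast] at hib
      calc sInter[i] = sInter.getD i 0 := (List.getD_eq_getElem _ _ hi).symm
        _ = tInter.getD i 0 := hib
        _ = tInter[i] := List.getD_eq_getElem _ _ hi'
end

section
/- If an alternating cycle C in the breakpoint graph is unbalanced and clean, then a single indel (an insertion of intergenic nucleotides on an origin edge if C is positive, or a virtual insertion on a target edge if C is negative) makes C balanced, achieving Δc = 0 and Δc_g = 1. -/
/-- A cycle of the labeled intergenic breakpoint graph, recorded by the weights of its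
origin edges, the weights of its target edges, and whether it is clean (no labeled edge). -/
structure Cyc where
  ow : List ℕ
  tw : List ℕ
  clean : Bool

/-- A cycle is good when it is clean and balanced. -/
def Cyc.goodB (c : Cyc) : Bool := c.clean && (c.ow.sum == c.tw.sum)

/-!
If `C` is positive, adding the deficit `Σ tw - Σ ow` to its first origin edge balances it; if
negative, adding `Σ ow - Σ tw` to its first target edge does. Since `C` is clean, it thereby
becomes good, and replacing it in place keeps the number of cycles while adding one good cycle.
-/

theorem List.sum_set_getD_add {M : Type*} [AddCommMonoid M] (l : List M) {i : ℕ}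
    (hi : i < l.length) (w : M) : (l.set i (l.getD i 0 + w)).sum = l.sum + w := by
  rw [List.getD_eq_getElem _ _ hi, List.sum_set, if_pos hi, ← List.sum_take_add_sum_drop l i,
    ← List.getElem_cons_drop hi, List.sum_cons]
  abel

theorem List.sum_set_getD_add_sub {l : List ℕ} {i s : ℕ} (hi : i < l.length)
    (hs : l.sum ≤ s) :
    (l.set i (l.getD i 0 + (s - l.sum))).sum = s := by
  rw [List.sum_set_getD_add l hi, Nat.add_sub_cancel' hs]

theorem List.countP_append_cons_of_false_of_true {α : Type*} (p : α → Bool)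
    (pre post : List α) {a b : α} (ha : p a = false) (hb : p b = true) :
    (pre ++ b :: post).countP p = (pre ++ a :: post).countP p + 1 := by
  simp [List.countP_append, ha, hb, add_assoc]

theorem Cyc.goodB_eq_true_iff {c : Cyc} :
    c.goodB = true ↔ c.clean = true ∧ c.ow.sum = c.tw.sum := by
  simp [Cyc.goodB]

/-- If an alternating cycle `C` of the breakpoint graph (the graph being the list of its
cycles `pre ++ C :: post`) is unbalanced and clean, then a single indel — an insertion of
`w` intergenic nucleotides on one origin edge of `C` if `C` is positive, or a virtual
insertion of `w` nucleotides on one target edge if `C` is negative — makes `C` balanced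
(hence good), achieving `Δc = 0` (the number of cycles is unchanged) and `Δc_g = 1`
(the number of good cycles increases by one). -/
theorem stmt7 (pre post : List Cyc) (C : Cyc)
    (hclean : C.clean = true) (hunbal : C.ow.sum ≠ C.tw.sum)
    (how : C.ow ≠ []) (htw : C.tw ≠ []) :
    ∃ (C' : Cyc) (w : ℕ),
      ((C.ow.sum < C.tw.sum ∧ ∃ i < C.ow.length,
          C' = ⟨C.ow.set i (C.ow.getD i 0 + w), C.tw, C.clean⟩) ∨
       (C.tw.sum < C.ow.sum ∧ ∃ j < C.tw.length,
          C' = ⟨C.ow, C.tw.set j (C.tw.getD j 0 + w), C.clean⟩)) ∧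
      C'.goodB = true ∧
      (pre ++ C' :: post).length = (pre ++ C :: post).length ∧
      (pre ++ C' :: post).countP Cyc.goodB = (pre ++ C :: post).countP Cyc.goodB + 1 := by
  have hbad : C.goodB = false :=
    Bool.eq_false_iff.mpr fun h => hunbal (Cyc.goodB_eq_true_iff.mp h).2
  rcases Nat.lt_or_gt_of_ne hunbal with hpos | hneg
  · have h0 : 0 < C.ow.length := List.length_pos_iff.mpr how
    have hgood :
        Cyc.goodB ⟨C.ow.set 0 (C.ow.getD 0 0 + (C.tw.sum - C.ow.sum)), C.tw, C.clean⟩ :=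
      Cyc.goodB_eq_true_iff.mpr ⟨hclean, List.sum_set_getD_add_sub h0 hpos.le⟩
    exact ⟨_, _, Or.inl ⟨hpos, 0, h0, rfl⟩, hgood, by simp,
      List.countP_append_cons_of_false_of_true _ _ _ hbad hgood⟩
  · have h0 : 0 < C.tw.length := List.length_pos_iff.mpr htw
    have hgood :
        Cyc.goodB ⟨C.ow, C.tw.set 0 (C.tw.getD 0 0 + (C.ow.sum - C.tw.sum)), C.clean⟩ :=
      Cyc.goodB_eq_true_iff.mpr ⟨hclean, (List.sum_set_getD_add_sub h0 hneg.le).symm⟩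
    exact ⟨_, _, Or.inr ⟨hneg, 0, h0, rfl⟩, hgood, by simp,
      List.countP_append_cons_of_false_of_true _ _ _ hbad hgood⟩
end

section
/- Any valid sequence R of weighted operations transforming G1 into G2 satisfies W(R) ≥ (p1·Φ_g + p2·Φ)/Δ_max, where Φ = |π|+1−c(G1,G2), Φ_g = |π|+1−c_g(G1,G2), and Δ_max = max((p1+p2)/Wρ, 2(p1+p2)/Wτ, p1/Wδ). -/
/-!
Weighting the changes of the two potentials by `p1` and `p2`, each operation of kind `k`
lowers `p1·Φ_g + p2·Φ` by at most `c_k ∈ {p1 + p2, 2(p1 + p2), p1}`, and `c_k ≤ Δ_max·W_k`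
by the choice of `Δ_max`. Summing over the sequence, `p1·Φ_g + p2·Φ ≤ Δ_max·W(R)`.
-/

inductive OpKind | rev | trans | indel

def opWeight (Wρ Wτ Wδ : ℝ) : OpKind → ℝ
  | .rev => Wρ
  | .trans => Wτ
  | .indel => Wδ

noncomputable def deltaMax (Wρ Wτ Wδ p1 p2 : ℝ) : ℝ :=
  max (max ((p1 + p2) / Wρ) (2 * (p1 + p2) / Wτ)) (p1 / Wδ)

section

variable {Wρ Wτ Wδ p1 p2 : ℝ}

lemma opWeight_nonneg (hWρ : 0 ≤ Wρ) (hWτ : 0 ≤ Wτ) (hWδ : 0 ≤ Wδ) (k : OpKind) :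
    0 ≤ opWeight Wρ Wτ Wδ k := by
  cases k <;> assumption

lemma deltaMax_nonneg (hWρ : 0 ≤ Wρ) (hp : 0 ≤ p1 + p2) : 0 ≤ deltaMax Wρ Wτ Wδ p1 p2 :=
  le_max_of_le_left (le_max_of_le_left (div_nonneg hp hWρ))

lemma weighted_change_le_deltaMax_mul_opWeight (hWρ : 0 < Wρ) (hWτ : 0 < Wτ) (hWδ : 0 < Wδ)
    (hp1 : 0 ≤ p1) (hp2 : 0 ≤ p2) {k : OpKind} {dg d : ℝ}
    (hrev : k = .rev → dg ≤ 1 ∧ d ≤ 1) (htrans : k = .trans → dg ≤ 2 ∧ d ≤ 2)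
    (hindel : k = .indel → dg ≤ 1 ∧ d ≤ 0) :
    p1 * dg + p2 * d ≤ deltaMax Wρ Wτ Wδ p1 p2 * opWeight Wρ Wτ Wδ k := by
  cases k
  case rev =>
    obtain ⟨hdg, hd⟩ := hrev rfl
    calc p1 * dg + p2 * d ≤ p1 * 1 + p2 * 1 := by gcongr
      _ = p1 + p2 := by ring
      _ ≤ deltaMax Wρ Wτ Wδ p1 p2 * Wρ :=
        (div_le_iff₀ hWρ).1 (le_max_of_le_left (le_max_left _ _))
  case trans =>
    obtain ⟨hdg, hd⟩ := htrans rfl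
    calc p1 * dg + p2 * d ≤ p1 * 2 + p2 * 2 := by gcongr
      _ = 2 * (p1 + p2) := by ring
      _ ≤ deltaMax Wρ Wτ Wδ p1 p2 * Wτ :=
        (div_le_iff₀ hWτ).1 (le_max_of_le_left (le_max_right _ _))
  case indel =>
    obtain ⟨hdg, hd⟩ := hindel rfl
    calc p1 * dg + p2 * d ≤ p1 * 1 + p2 * 0 := by gcongr
      _ = p1 := by ring
      _ ≤ deltaMax Wρ Wτ Wδ p1 p2 * Wδ := (div_le_iff₀ hWδ).1 (le_max_right _ _)

lemma weighted_potential_le_deltaMax_mul_weight (hWρ : 0 < Wρ) (hWτ : 0 < Wτ) (hWδ : 0 < Wδ)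
    (hp1 : 0 ≤ p1) (hp2 : 0 ≤ p2) (R : List (OpKind × ℝ × ℝ))
    (hrev : ∀ x ∈ R, x.1 = OpKind.rev → x.2.1 ≤ 1 ∧ x.2.2 ≤ 1)
    (htrans : ∀ x ∈ R, x.1 = OpKind.trans → x.2.1 ≤ 2 ∧ x.2.2 ≤ 2)
    (hindel : ∀ x ∈ R, x.1 = OpKind.indel → x.2.1 ≤ 1 ∧ x.2.2 ≤ 0) :
    p1 * (R.map fun x => x.2.1).sum + p2 * (R.map fun x => x.2.2).sum ≤
      deltaMax Wρ Wτ Wδ p1 p2 * (R.map fun x => opWeight Wρ Wτ Wδ x.1).sum := by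
  simp only [← List.sum_map_mul_left, ← List.sum_map_add]
  exact List.sum_le_sum fun x hx => weighted_change_le_deltaMax_mul_opWeight hWρ hWτ hWδ hp1 hp2
    (hrev x hx) (htrans x hx) (hindel x hx)

end

theorem stmt10_general (Wρ Wτ Wδ p1 p2 Φ Φg : ℝ)
    (hWρ : 0 < Wρ) (hWτ : 0 < Wτ) (hWδ : 0 < Wδ)
    (hp1 : 0 ≤ p1) (hp2 : 0 ≤ p2)
    (R : List (OpKind × ℝ × ℝ))
    (hrev : ∀ x ∈ R, x.1 = OpKind.rev → x.2.1 ≤ 1 ∧ x.2.2 ≤ 1)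
    (htrans : ∀ x ∈ R, x.1 = OpKind.trans → x.2.1 ≤ 2 ∧ x.2.2 ≤ 2)
    (hindel : ∀ x ∈ R, x.1 = OpKind.indel → x.2.1 ≤ 1 ∧ x.2.2 ≤ 0)
    (hvalidg : (R.map fun x => x.2.1).sum = Φg)
    (hvalid : (R.map fun x => x.2.2).sum = Φ) :
    (R.map fun x => opWeight Wρ Wτ Wδ x.1).sum ≥
      (p1 * Φg + p2 * Φ) / max (max ((p1 + p2) / Wρ) (2 * (p1 + p2) / Wτ)) (p1 / Wδ) := by
  subst hvalidg hvalid
  have hweight : 0 ≤ (R.map fun x => opWeight Wρ Wτ Wδ x.1).sum :=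
    List.sum_nonneg <| List.forall_mem_map.2 fun x _ => opWeight_nonneg hWρ.le hWτ.le hWδ.le x.1
  have hbound := weighted_potential_le_deltaMax_mul_weight hWρ hWτ hWδ hp1 hp2 R hrev htrans hindel
  -- when `p1 = p2 = 0` we have `Δ_max = 0`, and the bound reads `0 / 0 = 0 ≤ W(R)`
  exact div_le_of_le_mul₀ (deltaMax_nonneg hWρ.le (add_nonneg hp1 hp2)) hweight
    (hbound.trans_eq (mul_comm _ _))

/-- Any valid sequence `R` of weighted operations transforming `G1` into `G2` satisfies
`W(R) ≥ (p1·Φ_g + p2·Φ)/Δ_max`, where `Φ = |π|+1−c(G1,G2)`, `Φ_g = |π|+1−c_g(G1,G2)` and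
`Δ_max = max((p1+p2)/Wρ, 2(p1+p2)/Wτ, p1/Wδ)`. Each element of `R` records its kind
together with the changes it causes to `Φ_g` and `Φ` (bounded by the per-kind bounds:
reversals change each potential by at most 1, transpositions by at most 2, indels change
`Φ_g` by at most 1 and `Φ` by at most 0); validity means that the changes, which add up
over the sequence, reduce the potentials `Φ_g` and `Φ` exactly to zero. -/
theorem stmt10 (Wρ Wτ Wδ p1 p2 Φ Φg : ℝ)
    (hWρ : 0 < Wρ) (hWτ : 0 < Wτ) (hWδ : 0 < Wδ)
    (hp1 : 0 ≤ p1) (hp2 : 0 ≤ p2) (hp : ¬(p1 = 0 ∧ p2 = 0))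
    (R : List (OpKind × ℝ × ℝ))
    (hrev : ∀ x ∈ R, x.1 = OpKind.rev → x.2.1 ≤ 1 ∧ x.2.2 ≤ 1)
    (htrans : ∀ x ∈ R, x.1 = OpKind.trans → x.2.1 ≤ 2 ∧ x.2.2 ≤ 2)
    (hindel : ∀ x ∈ R, x.1 = OpKind.indel → x.2.1 ≤ 1 ∧ x.2.2 ≤ 0)
    (hvalidg : (R.map fun x => x.2.1).sum = Φg)
    (hvalid : (R.map fun x => x.2.2).sum = Φ) :
    (R.map fun x => opWeight Wρ Wτ Wδ x.1).sum ≥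
      (p1 * Φg + p2 * Φ) / max (max ((p1 + p2) / Wρ) (2 * (p1 + p2) / Wτ)) (p1 / Wδ) :=
  stmt10_general Wρ Wτ Wδ p1 p2 Φ Φg hWρ hWτ hWδ hp1 hp2 R hrev htrans hindel hvalidg hvalid
end

section
/- Algorithm 1 terminates: since every iteration's operation sequence strictly decreases the potential p1·(|π|+1−c_g) + p2·(|π|+1−c) (which is a nonnegative integer-valued quantity when p1, p2 are positive integers and the per-step decreases are positive integers), the while loop executes finitely many iterations. -/
/-- Algorithm 1 terminates. The state of the while loop carries the nonnegative
integer-valued potential `φ = p1·(|π|+1−c_g) + p2·(|π|+1−c)` (with `p1, p2` positive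
integers); the loop stops exactly when the graph has only trivial good cycles, i.e. when
the potential is zero (`hstop`); and each of the seven steps achieves
`(Δc_g, Δc) ∈ {(1,0), (2,2), (1,2), (1,1), (2,1)}`, so every iteration strictly
decreases the potential by the positive integer `p1·Δc_g + p2·Δc` (`hdec`). Hence the
while loop executes finitely many iterations: after at most `φ s0` steps it is done. -/
theorem stmt16 {State : Type*} (p1 p2 : ℕ) (hp1 : 0 < p1) (hp2 : 0 < p2)
    (φ : State → ℕ) (done : State → Prop) (step : State → State)
    (hstop : ∀ s, done s ↔ φ s = 0)
    (hdec : ∀ s, ¬ done s →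
      ∃ d : ℕ × ℕ, d ∈ ({(1, 0), (2, 2), (1, 2), (1, 1), (2, 1)} : Set (ℕ × ℕ)) ∧
        φ (step s) + (p1 * d.1 + p2 * d.2) = φ s)
    (s0 : State) :
    ∃ n ≤ φ s0, done (step^[n] s0) := by
  have key : ∀ k s, φ s ≤ k → ∃ n ≤ φ s, done (step^[n] s) := by
    intro k
    induction k with
    | zero =>
      intro s hs
      exact ⟨0, Nat.zero_le _, (hstop s).mpr (Nat.le_zero.mp hs)⟩
    | succ k ih =>
      intro s hs
      by_cases hd : done s
      · exact ⟨0, Nat.zero_le _, hd⟩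
      · obtain ⟨d, hdmem, heq⟩ := hdec s hd
        have hpos : 0 < p1 * d.1 + p2 * d.2 := by
          simp only [Set.mem_insert_iff, Set.mem_singleton_iff] at hdmem
          rcases hdmem with h|h|h|h|h <;> subst h <;> simp <;> omega
        have hlt : φ (step s) < φ s := by omega
        obtain ⟨n, hn, hdone⟩ := ih (step s) (by omega)
        refine ⟨n + 1, by omega, ?_⟩
        rwa [Function.iterate_succ_apply]
  exact key (φ s0) s0 le_rfl
end
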